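/- arXiv:1904.04583 — 4 statements merged into one kernel-verified Lean document; each statement's English description precedes it below -/
import Mathlib

section
/- For fixed N>0, with 0<ε<N, 0<d<N, and 0<ω≤min(ε,d), the φ-coefficient φ(ω,ε,d) = (ωN − εd)/√(ε(N−ε)d(N−d)) is strictly increasing in ω (for fixed ε,d), strictly decreasing in ε (for fixed ω,d), and strictly decreasing in d (for fixed ω,ε). -/
/-- The φ-coefficient φ(ω,ε,d) = (ωN − εd)/√(ε(N−ε)d(N−d)). -/
noncomputable def phiCoef (N ω ε d : ℝ) : ℝ :=
  (ω * N - ε * d) / Real.sqrt (ε * (N - ε) * d * (N - d))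

private lemma crossA (N ε₁ ε₂ : ℝ) (h10 : 0 < ε₁) (h1N : ε₁ < N) (h20 : 0 < ε₂)
    (h2N : ε₂ < N) (hlt : ε₁ < ε₂) :
    (N - ε₂) * Real.sqrt (ε₁ * (N - ε₁)) < (N - ε₁) * Real.sqrt (ε₂ * (N - ε₂)) := by
  have hs₁ : (0:ℝ) < Real.sqrt (ε₁ * (N - ε₁)) := Real.sqrt_pos.mpr (by nlinarith)
  have hs₂ : (0:ℝ) < Real.sqrt (ε₂ * (N - ε₂)) := Real.sqrt_pos.mpr (by nlinarith)
  have hq₁ : Real.sqrt (ε₁ * (N - ε₁)) ^ 2 = ε₁ * (N - ε₁) := Real.sq_sqrt (by nlinarith)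
  have hq₂ : Real.sqrt (ε₂ * (N - ε₂)) ^ 2 = ε₂ * (N - ε₂) := Real.sq_sqrt (by nlinarith)
  apply lt_of_pow_lt_pow_left₀ 2 (mul_nonneg (by linarith) (Real.sqrt_nonneg _))
  rw [mul_pow, mul_pow, hq₁, hq₂]
  have hkey : ((N - ε₁) * (N - ε₂)) * ((N - ε₂) * ε₁) < ((N - ε₁) * (N - ε₂)) * ((N - ε₁) * ε₂) := by
    apply mul_lt_mul_of_pos_left (by nlinarith) (mul_pos (by linarith) (by linarith))
  linear_combination hkey

private lemma crossB (N ε₁ ε₂ : ℝ) (h10 : 0 < ε₁) (h1N : ε₁ < N) (h20 : 0 < ε₂)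
    (h2N : ε₂ < N) (hlt : ε₁ < ε₂) :
    ε₁ * Real.sqrt (ε₂ * (N - ε₂)) < ε₂ * Real.sqrt (ε₁ * (N - ε₁)) := by
  have hs₁ : (0:ℝ) < Real.sqrt (ε₁ * (N - ε₁)) := Real.sqrt_pos.mpr (by nlinarith)
  have hq₁ : Real.sqrt (ε₁ * (N - ε₁)) ^ 2 = ε₁ * (N - ε₁) := Real.sq_sqrt (by nlinarith)
  have hq₂ : Real.sqrt (ε₂ * (N - ε₂)) ^ 2 = ε₂ * (N - ε₂) := Real.sq_sqrt (by nlinarith)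
  apply lt_of_pow_lt_pow_left₀ 2 (mul_nonneg h20.le (Real.sqrt_nonneg _))
  rw [mul_pow, mul_pow, hq₁, hq₂]
  have hkey : (ε₁ * ε₂) * (ε₁ * (N - ε₂)) < (ε₁ * ε₂) * (ε₂ * (N - ε₁)) := by
    apply mul_lt_mul_of_pos_left (by nlinarith) (mul_pos h10 h20)
  linear_combination hkey

private lemma key (N ω ε₁ ε₂ d : ℝ) (h10 : 0 < ε₁) (h1N : ε₁ < N) (h20 : 0 < ε₂)
    (h2N : ε₂ < N) (hω : 0 < ω) (hωd : ω ≤ d) (hlt : ε₁ < ε₂) :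
    (ω * N - ε₂ * d) / Real.sqrt (ε₂ * (N - ε₂)) <
      (ω * N - ε₁ * d) / Real.sqrt (ε₁ * (N - ε₁)) := by
  have hs₁ : (0:ℝ) < Real.sqrt (ε₁ * (N - ε₁)) := Real.sqrt_pos.mpr (by nlinarith)
  have hs₂ : (0:ℝ) < Real.sqrt (ε₂ * (N - ε₂)) := Real.sqrt_pos.mpr (by nlinarith)
  rw [div_lt_div_iff₀ hs₂ hs₁]
  have hA := crossA N ε₁ ε₂ h10 h1N h20 h2N hlt
  have hB := crossB N ε₁ ε₂ h10 h1N h20 h2N hlt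
  have h1 := mul_lt_mul_of_pos_left hA hω
  have h2 := mul_le_mul_of_nonneg_left hB.le (sub_nonneg.mpr hωd)
  nlinarith [h1, h2]

private lemma phi_split (N ω ε d : ℝ) (hε0 : 0 < ε) (hεN : ε < N) :
    phiCoef N ω ε d = ((ω * N - ε * d) / Real.sqrt (ε * (N - ε))) / Real.sqrt (d * (N - d)) := by
  unfold phiCoef
  rw [div_div, ← Real.sqrt_mul (by nlinarith : (0:ℝ) ≤ ε * (N - ε))]
  ring_nf

private lemma phi_symm (N ω ε d : ℝ) : phiCoef N ω ε d = phiCoef N ω d ε := by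
  unfold phiCoef
  rw [show ε * (N - ε) * d * (N - d) = d * (N - d) * ε * (N - ε) by ring]
  ring_nf

theorem stmt_6 (N : ℝ) (hN : 0 < N) :
    (∀ ε d ω₁ ω₂ : ℝ, 0 < ε → ε < N → 0 < d → d < N →
      0 < ω₁ → ω₁ ≤ min ε d → 0 < ω₂ → ω₂ ≤ min ε d → ω₁ < ω₂ →
      phiCoef N ω₁ ε d < phiCoef N ω₂ ε d) ∧
    (∀ ε₁ ε₂ d ω : ℝ, 0 < ε₁ → ε₁ < N → 0 < ε₂ → ε₂ < N → 0 < d → d < N →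
      0 < ω → ω ≤ min ε₁ d → ω ≤ min ε₂ d → ε₁ < ε₂ →
      phiCoef N ω ε₂ d < phiCoef N ω ε₁ d) ∧
    (∀ ε d₁ d₂ ω : ℝ, 0 < ε → ε < N → 0 < d₁ → d₁ < N → 0 < d₂ → d₂ < N →
      0 < ω → ω ≤ min ε d₁ → ω ≤ min ε d₂ → d₁ < d₂ →
      phiCoef N ω ε d₂ < phiCoef N ω ε d₁) := by
  refine ⟨?_, ?_, ?_⟩
  · intro ε d ω₁ ω₂ hε0 hεN hd0 hdN _ _ _ _ hlt
    unfold phiCoef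
    have hs : (0:ℝ) < Real.sqrt (ε * (N - ε) * d * (N - d)) :=
      Real.sqrt_pos.mpr (by nlinarith [mul_pos hε0 (sub_pos.mpr hεN), mul_pos hd0 (sub_pos.mpr hdN)])
    apply div_lt_div_of_pos_right ?_ hs
    nlinarith
  · intro ε₁ ε₂ d ω h10 h1N h20 h2N hd0 hdN hω hω1 hω2 hlt
    rw [phi_split N ω ε₁ d h10 h1N, phi_split N ω ε₂ d h20 h2N]
    have ht : (0:ℝ) < Real.sqrt (d * (N - d)) := Real.sqrt_pos.mpr (mul_pos hd0 (by linarith))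
    exact div_lt_div_of_pos_right
      (key N ω ε₁ ε₂ d h10 h1N h20 h2N hω (le_trans hω1 (min_le_right _ _)) hlt) ht
  · intro ε d₁ d₂ ω hε0 hεN h10 h1N h20 h2N hω hω1 hω2 hlt
    rw [phi_symm N ω ε d₁, phi_symm N ω ε d₂]
    rw [phi_split N ω d₁ ε h10 h1N, phi_split N ω d₂ ε h20 h2N]
    have ht : (0:ℝ) < Real.sqrt (ε * (N - ε)) := Real.sqrt_pos.mpr (mul_pos hε0 (by linarith))
    exact div_lt_div_of_pos_right
      (key N ω d₁ d₂ ε h10 h1N h20 h2N hω (le_trans hω1 (min_le_left _ _)) hlt) ht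
end

section
/- The partial derivative with respect to d of the φ-coefficient (ωN − εd)/√(ε(N−ε)d(N−d)) is negative whenever 0<ε<N, 0<d<N, 0<ω≤min(ε,d); specifically, the sign of the derivative equals the sign of −N[d(ε−2ω)+ωN], which is negative since if ε<2ω then 2ω−ε≤ω and d<N imply d(2ω−ε)<Nω. -/
/-! Factor the constant `√(ε(N-ε))` out of the denominator and apply the quotient rule to
`(ωN - εt) / √(t(N - t))`; the numerator of the derivative collapses to
`-N(d(ε - 2ω) + ωN)`. Its sign is that of `-(d(ε - ω) + ω(N - d))`, negative because
`0 < ω ≤ ε` and `d < N`. -/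

namespace Real

theorem rpow_neg_one_half {x : ℝ} (hx : 0 ≤ x) : x ^ (-(1 : ℝ) / 2) = (√x)⁻¹ := by
  rw [neg_div, rpow_neg hx, ← sqrt_eq_rpow]

theorem rpow_three_halves {x : ℝ} (hx : 0 ≤ x) : x ^ ((3 : ℝ) / 2) = x * √x := by
  rw [show (3 : ℝ) / 2 = 1 + 1 / 2 by norm_num, rpow_add' hx (by norm_num), rpow_one,
    ← sqrt_eq_rpow]

end Real

theorem hasDerivAt_sqrt_mul_sub {N d : ℝ} (hd : 0 < d) (hdN : d < N) :
    HasDerivAt (fun t : ℝ => √(t * (N - t))) ((N - 2 * d) / (2 * √(d * (N - d)))) d := by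
  have hu : HasDerivAt (fun t : ℝ => t * (N - t)) (N - 2 * d) d := by
    refine ((hasDerivAt_id d).mul ((hasDerivAt_id d).const_sub N)).congr_deriv ?_
    simp only [id]
    ring
  exact hu.sqrt (mul_pos hd (sub_pos.2 hdN)).ne'

theorem hasDerivAt_div_sqrt_mul_mul_sub {A N ε ω d : ℝ} (hA : 0 < A) (hd : 0 < d)
    (hdN : d < N) :
    HasDerivAt (fun t : ℝ => (ω * N - ε * t) / √(A * t * (N - t)))
      (A ^ (-(1 : ℝ) / 2) * (-N * (d * (ε - 2 * ω) + ω * N)) /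
        (2 * (d * (N - d)) ^ ((3 : ℝ) / 2))) d := by
  have hu : 0 < d * (N - d) := mul_pos hd (sub_pos.2 hdN)
  have hsA : 0 < √A := Real.sqrt_pos.2 hA
  have hsu : 0 < √(d * (N - d)) := Real.sqrt_pos.2 hu
  have hfun : (fun t : ℝ => (ω * N - ε * t) / √(A * t * (N - t))) =
      fun t => (ω * N - ε * t) / (√A * √(t * (N - t))) := by
    funext t
    rw [mul_assoc, Real.sqrt_mul hA.le]
  have hnum : HasDerivAt (fun t : ℝ => ω * N - ε * t) (-ε) d := by
    simpa using ((hasDerivAt_id d).const_mul ε).const_sub (ω * N)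
  rw [hfun]
  refine (hnum.div ((hasDerivAt_sqrt_mul_sub hd hdN).const_mul √A)
    (mul_pos hsA hsu).ne').congr_deriv ?_
  rw [Real.rpow_neg_one_half hA.le, Real.rpow_three_halves hu.le]
  have hNd : N - d ≠ 0 := (sub_pos.2 hdN).ne'
  field_simp
  rw [Real.sq_sqrt hu.le]
  ring

theorem phi_numerator_pos {N ε d ω : ℝ} (hd : 0 ≤ d) (hdN : d < N) (hω : 0 < ω)
    (hωε : ω ≤ ε) : 0 < d * (ε - 2 * ω) + ω * N := by
  linarith [mul_nonneg hd (sub_nonneg.2 hωε), mul_pos hω (sub_pos.2 hdN)]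

theorem stmt_7_general (N ε d ω : ℝ) (hε : 0 < ε) (hεN : ε < N)
    (hd : 0 < d) (hdN : d < N) (hω : 0 < ω) (hωm : ω ≤ min ε d) :
    HasDerivAt (fun t : ℝ => (ω * N - ε * t) / Real.sqrt (ε * (N - ε) * t * (N - t)))
      ((ε * (N - ε)) ^ (-(1 : ℝ) / 2) *
        (-N * (d * (ε - 2 * ω) + ω * N)) / (2 * (d * (N - d)) ^ ((3 : ℝ) / 2))) d ∧
    (ε * (N - ε)) ^ (-(1 : ℝ) / 2) *
        (-N * (d * (ε - 2 * ω) + ω * N)) / (2 * (d * (N - d)) ^ ((3 : ℝ) / 2)) < 0 ∧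
    -N * (d * (ε - 2 * ω) + ω * N) < 0 := by
  have hA : 0 < ε * (N - ε) := mul_pos hε (sub_pos.2 hεN)
  have hu : 0 < d * (N - d) := mul_pos hd (sub_pos.2 hdN)
  have hsign : -N * (d * (ε - 2 * ω) + ω * N) < 0 :=
    mul_neg_of_neg_of_pos (by linarith)
      (phi_numerator_pos hd.le hdN hω (hωm.trans (min_le_left ε d)))
  refine ⟨hasDerivAt_div_sqrt_mul_mul_sub hA hd hdN, ?_, hsign⟩
  exact div_neg_of_neg_of_pos (mul_neg_of_pos_of_neg (Real.rpow_pos_of_pos hA _) hsign)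
    (mul_pos two_pos (Real.rpow_pos_of_pos hu _))

theorem stmt_7 (N ε d ω : ℝ) (hN : 0 < N) (hε : 0 < ε) (hεN : ε < N)
    (hd : 0 < d) (hdN : d < N) (hω : 0 < ω) (hωm : ω ≤ min ε d) :
    HasDerivAt (fun t : ℝ => (ω * N - ε * t) / Real.sqrt (ε * (N - ε) * t * (N - t)))
      ((ε * (N - ε)) ^ (-(1 : ℝ) / 2) *
        (-N * (d * (ε - 2 * ω) + ω * N)) / (2 * (d * (N - d)) ^ ((3 : ℝ) / 2))) d ∧
    (ε * (N - ε)) ^ (-(1 : ℝ) / 2) *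
        (-N * (d * (ε - 2 * ω) + ω * N)) / (2 * (d * (N - d)) ^ ((3 : ℝ) / 2)) < 0 ∧
    -N * (d * (ε - 2 * ω) + ω * N) < 0 :=
  stmt_7_general N ε d ω hε hεN hd hdN hω hωm
end

section
/- Under the Erdős–Rényi model with edge probability p, for fixed 0<ε<N, the expectation of φ(u,S) = (ωN − εd_u)/√(ε(N−ε)d_u(N−d_u)) equals 0, where ω = Σ_{v∈S\{u}} X_v and d_u = Σ_{v≠u} X_v for i.i.d. Bernoulli(p) variables X_v (with the convention that the expression is interpreted suitably when d_u∈{0,N}). -/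
/-!
Write `d = ∑_{v ≠ u} X_v` and `g(d) = (ε (N - ε) d (N - d))^{-1/2}`. The integrand is
`N ∑_{v ∈ S \ {u}} X_v g(d) - ε ∑_{v ≠ u} X_v g(d)`. The `X_v`, `v ≠ u`, are independent with a
common law, so swapping two of them preserves the joint law and fixes `d`; hence `E[X_v g(d)] = c`
for all `v ≠ u`. As `|S \ {u}| = ε` and `|{v ≠ u}| = N`, both sums have expectation `N ε c`.
Only measurability of `g` enters, so the value `0⁻¹ = 0` at `d ∈ {0, N}` plays no role; every term
takes finitely many values, hence is integrable.
-/

open MeasureTheory ProbabilityTheory Finset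

namespace MeasureTheory

theorem Integrable.of_finite_range {Ω E : Type*} [MeasurableSpace Ω] {μ : Measure Ω}
    [NormedAddCommGroup E] [IsFiniteMeasure μ] {f : Ω → E}
    (hf : AEStronglyMeasurable f μ) (hrange : (Set.range f).Finite) : Integrable f μ := by
  obtain ⟨C, hC⟩ := (hrange.image (‖·‖)).bddAbove
  exact .of_bound hf C (ae_of_all _ fun ω => hC ⟨f ω, Set.mem_range_self ω, rfl⟩)

end MeasureTheory

open scoped Classical in
theorem preimage_eq_ite_of_zero_or_one {Ω : Type*} {Z : Ω → ℝ} (hZ : ∀ ω, Z ω = 0 ∨ Z ω = 1)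
    (s : Set ℝ) :
    Z ⁻¹' s = if (1 : ℝ) ∈ s then (if (0 : ℝ) ∈ s then Set.univ else {ω | Z ω = 1})
      else (if (0 : ℝ) ∈ s then {ω | Z ω = 1}ᶜ else ∅) := by
  ext ω
  rcases hZ ω with h | h <;> split_ifs <;> simp_all

namespace ProbabilityTheory

theorem identDistrib_of_zero_or_one {Ω Ω' : Type*} [MeasurableSpace Ω] [MeasurableSpace Ω']
    {μ : Measure Ω} {ν : Measure Ω'} [IsProbabilityMeasure μ]
    [IsProbabilityMeasure ν] {X : Ω → ℝ} {Y : Ω' → ℝ} (hX : Measurable X) (hY : Measurable Y)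
    (hX01 : ∀ ω, X ω = 0 ∨ X ω = 1) (hY01 : ∀ ω, Y ω = 0 ∨ Y ω = 1)
    (h : μ {ω | X ω = 1} = ν {ω | Y ω = 1}) : IdentDistrib X Y μ ν := by
  refine ⟨hX.aemeasurable, hY.aemeasurable, Measure.ext fun s hs => ?_⟩
  rw [Measure.map_apply hX hs, Measure.map_apply hY hs, preimage_eq_ite_of_zero_or_one hX01,
    preimage_eq_ite_of_zero_or_one hY01]
  split_ifs
  · simp
  · exact h
  · rw [measure_compl (measurableSet_eq_fun hX measurable_const) (measure_ne_top _ _),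
      measure_compl (measurableSet_eq_fun hY measurable_const) (measure_ne_top _ _), h]
    simp
  · simp

variable {Ω ι β : Type*} [MeasurableSpace Ω] {μ : Measure Ω} [Fintype ι]

theorem iIndepFun.identDistrib_comp_perm [MeasurableSpace β] {X : ι → Ω → β}
    (hX : ∀ i, AEMeasurable (X i) μ) (hindep : iIndepFun X μ) (σ : Equiv.Perm ι)
    (hσ : ∀ i, IdentDistrib (X (σ i)) (X i) μ μ) :
    IdentDistrib (fun ω i => X (σ i) ω) (fun ω i => X i ω) μ μ where
  aemeasurable_fst := aemeasurable_pi_lambda _ fun i => hX (σ i)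
  aemeasurable_snd := aemeasurable_pi_lambda _ hX
  map_eq := by
    rw [(hindep.precomp σ.injective).map_fun_eq_pi_map fun i => hX (σ i),
      hindep.map_fun_eq_pi_map hX]
    exact congrArg Measure.pi (funext fun i => (hσ i).map_eq)

theorem iIndepFun.integral_mul_comp_sum_eq [IsProbabilityMeasure μ] [DecidableEq ι]
    {X : ι → Ω → ℝ} (hX : ∀ i, Measurable (X i)) (hindep : iIndepFun X μ) {U : Finset ι}
    (hU : ∀ i ∈ U, ∀ j ∈ U, IdentDistrib (X i) (X j) μ μ) {g : ℝ → ℝ} (hg : Measurable g)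
    {v w : ι} (hv : v ∈ U) (hw : w ∈ U) :
    ∫ ω, X v ω * g (∑ i ∈ U, X i ω) ∂μ = ∫ ω, X w ω * g (∑ i ∈ U, X i ω) ∂μ := by
  set σ := Equiv.swap v w
  have hσ : ∀ i, IdentDistrib (X (σ i)) (X i) μ μ := by
    intro i
    rw [Equiv.swap_apply_def]
    split_ifs with hiv hiw
    · exact hiv ▸ hU w hw v hv
    · exact hiw ▸ hU v hv w hw
    · exact .refl (hX i).aemeasurable
  have hσU : {i | σ i ≠ i} ⊆ U := fun i hi => by
    rcases (Equiv.swap_apply_ne_self_iff.mp hi).2 with rfl | rfl <;> assumption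
  have hG : Measurable fun x : ι → ℝ => x w * g (∑ i ∈ U, x i) := by fun_prop
  have hsum (ω : Ω) : ∑ i ∈ U, X (σ i) ω = ∑ i ∈ U, X i ω := σ.sum_comp U (X · ω) hσU
  have key := ((hindep.identDistrib_comp_perm (fun i => (hX i).aemeasurable) σ hσ).comp
    hG).integral_eq
  simpa only [Function.comp_def, hsum, σ, Equiv.swap_apply_right] using key

end ProbabilityTheory

theorem Finset.card_mul_sum_eq_card_mul_sum {ι R : Type*} [CommSemiring R] {s t : Finset ι}
    {c : ι → R} (hc : ∀ v ∈ s, ∀ w ∈ t, c v = c w) :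
    (#t : R) * ∑ v ∈ s, c v = #s * ∑ w ∈ t, c w := by
  calc (#t : R) * ∑ v ∈ s, c v = ∑ v ∈ s, ∑ _w ∈ t, c v := by simp [mul_sum]
    _ = ∑ v ∈ s, ∑ w ∈ t, c w := sum_congr rfl fun v hv => sum_congr rfl fun w hw => hc v hv w hw
    _ = #s * ∑ w ∈ t, c w := by simp

theorem stmt_8_general {Ω : Type*} [MeasurableSpace Ω] (μ : Measure Ω) [IsProbabilityMeasure μ]
    {V : Type*} [Fintype V] [DecidableEq V]
    (u : V) (S : Finset V) (hu : u ∈ S)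
    (p : ℝ)
    (X : V → Ω → ℝ)
    (hmeas : ∀ v, Measurable (X v))
    (hBer : ∀ v g, X v g = 0 ∨ X v g = 1)
    (hprob : ∀ v, v ≠ u → μ {g | X v g = 1} = ENNReal.ofReal p)
    (hindep : ProbabilityTheory.iIndepFun X μ)
    (N ε : ℝ) (hN : N = (Fintype.card V : ℝ) - 1)
    (hε : ε = (S.card : ℝ) - 1) :
    ∫ g, ((∑ v ∈ S.erase u, X v g) * N - ε * (∑ v ∈ Finset.univ.erase u, X v g)) /
        Real.sqrt (ε * (N - ε) * (∑ v ∈ Finset.univ.erase u, X v g) *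
          (N - (∑ v ∈ Finset.univ.erase u, X v g))) ∂μ = 0 := by
  set U := univ.erase u
  set h : ℝ → ℝ := fun d => (√(ε * (N - ε) * d * (N - d)))⁻¹
  set T : V → Ω → ℝ := fun v g => X v g * h (∑ i ∈ U, X i g)
  have hcardU : (#U : ℝ) = N := by
    rw [card_erase_of_mem (mem_univ u), card_univ, Nat.cast_pred (Fintype.card_pos_iff.mpr ⟨u⟩),
      hN]
  have hcardS : (#(S.erase u) : ℝ) = ε := by
    rw [card_erase_of_mem hu, Nat.cast_pred (card_pos.mpr ⟨u, hu⟩), hε]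
  have hlaw : ∀ v ∈ U, ∀ w ∈ U, IdentDistrib (X v) (X w) μ μ := fun v hv w hw =>
    identDistrib_of_zero_or_one (hmeas v) (hmeas w) (hBer v) (hBer w)
      (by rw [hprob v (ne_of_mem_erase hv), hprob w (ne_of_mem_erase hw)])
  have hT_eq : ∀ v ∈ U, ∀ w ∈ U, ∫ g, T v g ∂μ = ∫ g, T w g ∂μ := fun v hv w hw =>
    hindep.integral_mul_comp_sum_eq hmeas hlaw (by fun_prop) hv hw
  have hT_int (v : V) : Integrable (T v) μ := by
    refine .of_finite_range (by fun_prop) <|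
      ((Set.Finite.pi fun _ => Set.toFinite {0, 1}).image
        fun x : V → ℝ => x v * h (∑ i ∈ U, x i)).subset ?_
    rintro _ ⟨g, rfl⟩
    exact ⟨fun i => X i g, fun i _ => hBer i g, rfl⟩
  calc _ = ∫ g, (N * ∑ v ∈ S.erase u, T v g - ε * ∑ v ∈ U, T v g) ∂μ := by
        congr 1 with g
        simp only [T, h, ← sum_mul, div_eq_mul_inv]
        ring
    _ = N * ∑ v ∈ S.erase u, ∫ g, T v g ∂μ - ε * ∑ v ∈ U, ∫ g, T v g ∂μ := by
        rw [integral_sub ((integrable_finsetSum _ fun v _ => hT_int v).const_mul N)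
          ((integrable_finsetSum _ fun v _ => hT_int v).const_mul ε), integral_const_mul,
          integral_const_mul, integral_finsetSum _ fun v _ => hT_int v,
          integral_finsetSum _ fun v _ => hT_int v]
    _ = 0 := by
        rw [← hcardU, ← hcardS, sub_eq_zero]
        exact card_mul_sum_eq_card_mul_sum fun v hv w hw =>
          hT_eq v (erase_subset_erase u (subset_univ S) hv) w hw

theorem stmt_8 {Ω : Type*} [MeasurableSpace Ω] (μ : Measure Ω) [IsProbabilityMeasure μ]
    {V : Type*} [Fintype V] [DecidableEq V]
    (u : V) (S : Finset V) (hu : u ∈ S)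
    (p : ℝ) (hp0 : 0 ≤ p) (hp1 : p ≤ 1)
    (X : V → Ω → ℝ)
    (hmeas : ∀ v, Measurable (X v))
    (hBer : ∀ v g, X v g = 0 ∨ X v g = 1)
    (hprob : ∀ v, v ≠ u → μ {g | X v g = 1} = ENNReal.ofReal p)
    (hindep : ProbabilityTheory.iIndepFun X μ)
    (N ε : ℝ) (hN : N = (Fintype.card V : ℝ) - 1) (hNpos : 0 < N)
    (hε : ε = (S.card : ℝ) - 1) (hε0 : 0 < ε) (hεN : ε < N) :
    ∫ g, ((∑ v ∈ S.erase u, X v g) * N - ε * (∑ v ∈ Finset.univ.erase u, X v g)) /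
        Real.sqrt (ε * (N - ε) * (∑ v ∈ Finset.univ.erase u, X v g) *
          (N - (∑ v ∈ Finset.univ.erase u, X v g))) ∂μ = 0 :=
  stmt_8_general μ u S hu p X hmeas hBer hprob hindep N ε hN hε
end

section
/- Consider a graph G(n,m) containing two disjoint cliques C_s and C_t of equal size I with exactly one edge between them (joining u∈C_s and v∈C_t), and exactly one edge from each clique to the rest of the graph (via nodes c∈C_s and o∈C_t). If 5 ≤ I < n/4, then Φ(C_s) + Φ(C_t) > Φ(C_s ∪ C_t), where Φ(S) = Σ_{x∈S} (ω_x N − ε_S d_x)/√(ε_S(N−ε_S)d_x(N−d_x)) with N=n−1, ε_S=|S|−1, d_x the degree of x, and ω_x the number of neighbors of x in S\{x}. -/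
/-!
The score Φ is a sum of per-vertex summands, and merging the two cliques changes only the
size term ε (from I − 1 to 2I − 1) and raises each ω_x by at most one.
Every clique vertex has ω_x = I − 1 in its own clique and degree d_x ∈ [I − 1, I + 1]; in the
merged community its numerator ω_x N − (2I − 1) d_x is at most I (N − 2I + 1). Comparing
squares, each summand strictly decreases as soon as I ≥ 4 and N ≥ 2I, because
I² < (I − 1)(2I − 1) and (N − 2I + 1)(N − I + 1) ≤ (N − I − 1)².
-/

open Finset

/-- The number of neighbors of `x` inside `S \ {x}`. -/
def innerDeg {V : Type*} [DecidableEq V] (G : SimpleGraph V) [DecidableRel G.Adj]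
    (x : V) (S : Finset V) : ℕ := ((S.erase x).filter (G.Adj x)).card

/-- Φ(S) = Σ_{x∈S} (ω_x N − ε_S d_x)/√(ε_S(N−ε_S)d_x(N−d_x)). -/
noncomputable def commPhi {V : Type*} [Fintype V] [DecidableEq V] (G : SimpleGraph V)
    [DecidableRel G.Adj] (S : Finset V) : ℝ :=
  ∑ x ∈ S,
    ((innerDeg G x S : ℝ) * ((Fintype.card V : ℝ) - 1) -
        ((S.card : ℝ) - 1) * (G.degree x : ℝ)) /
      Real.sqrt (((S.card : ℝ) - 1) * (((Fintype.card V : ℝ) - 1) - ((S.card : ℝ) - 1)) *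
        (G.degree x : ℝ) * (((Fintype.card V : ℝ) - 1) - (G.degree x : ℝ)))

noncomputable def phiTerm (N ε ω d : ℝ) : ℝ :=
  (ω * N - ε * d) / Real.sqrt (ε * (N - ε) * d * (N - d))

lemma div_sqrt_lt_div_sqrt {a b A B : ℝ} (ha : 0 ≤ a) (hb : 0 ≤ b) (hA : 0 < A) (hB : 0 < B)
    (h : b ^ 2 * A < a ^ 2 * B) : b / Real.sqrt B < a / Real.sqrt A := by
  rw [div_lt_div_iff₀ (Real.sqrt_pos.2 hB) (Real.sqrt_pos.2 hA)]
  have hbA : b * Real.sqrt A = Real.sqrt (b ^ 2 * A) := by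
    rw [Real.sqrt_mul (sq_nonneg b), Real.sqrt_sq hb]
  have haB : a * Real.sqrt B = Real.sqrt (a ^ 2 * B) := by
    rw [Real.sqrt_mul (sq_nonneg a), Real.sqrt_sq ha]
  rw [hbA, haB]
  exact Real.sqrt_lt_sqrt (by positivity) h

lemma phiTerm_merge_lt {I N ω d : ℝ} (hI : 4 ≤ I) (hN : 2 * I ≤ N) (hd : 0 < d)
    (hωd : ω ≤ d) (hωI : ω ≤ I) (hdI : d ≤ I + 1) :
    phiTerm N (2 * I - 1) ω d < phiTerm N (I - 1) (I - 1) d := by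
  have hI1 : 0 < I - 1 := by linarith
  have hI2 : 0 < 2 * I - 1 := by linarith
  have hN2 : 0 < N - (2 * I - 1) := by linarith
  have hN1 : 0 < N - (I - 1) := by linarith
  have hNI : 0 < N - (I + 1) := by linarith
  have hNd : 0 < N - d := by linarith
  have hA : 0 < (I - 1) * (N - (I - 1)) * d * (N - d) := by positivity
  have hnum : 0 < (I - 1) * N - (I - 1) * d := by nlinarith
  unfold phiTerm
  set b := ω * N - (2 * I - 1) * d
  rcases le_or_gt b 0 with hb | hb
  · exact (div_nonpos_of_nonpos_of_nonneg hb (Real.sqrt_nonneg _)).trans_lt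
      (div_pos hnum (Real.sqrt_pos.2 hA))
  have hb_le : b ≤ I * (N - (2 * I - 1)) := by
    nlinarith [mul_nonneg hI2.le (sub_nonneg.2 hωd), mul_nonneg (sub_nonneg.2 hωI) hN2.le]
  have hsq : b ^ 2 ≤ (I * (N - (2 * I - 1))) ^ 2 := pow_le_pow_left₀ hb.le hb_le 2
  have hI_sq : I ^ 2 < (I - 1) * (2 * I - 1) := by nlinarith
  have hN_sq : (N - (2 * I - 1)) * (N - (I - 1)) ≤ (N - (I + 1)) ^ 2 := by nlinarith
  have hNd_sq : (N - (I + 1)) ^ 2 ≤ (N - d) ^ 2 := pow_le_pow_left₀ hNI.le (by linarith) 2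
  have hcore : b ^ 2 * (N - (I - 1)) < (I - 1) * (2 * I - 1) * (N - d) ^ 2 * (N - (2 * I - 1)) :=
    calc b ^ 2 * (N - (I - 1))
        ≤ (I * (N - (2 * I - 1))) ^ 2 * (N - (I - 1)) := mul_le_mul_of_nonneg_right hsq hN1.le
      _ = I ^ 2 * ((N - (2 * I - 1)) * (N - (I - 1))) * (N - (2 * I - 1)) := by ring
      _ < (I - 1) * (2 * I - 1) * (N - (I + 1)) ^ 2 * (N - (2 * I - 1)) :=
          mul_lt_mul_of_pos_right (mul_lt_mul hI_sq hN_sq (mul_pos hN2 hN1) (by positivity)) hN2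
      _ ≤ (I - 1) * (2 * I - 1) * (N - d) ^ 2 * (N - (2 * I - 1)) := by gcongr
  refine div_sqrt_lt_div_sqrt hnum.le hb.le hA (by positivity) ?_
  calc b ^ 2 * ((I - 1) * (N - (I - 1)) * d * (N - d))
      = b ^ 2 * (N - (I - 1)) * ((I - 1) * d * (N - d)) := by ring
    _ < (I - 1) * (2 * I - 1) * (N - d) ^ 2 * (N - (2 * I - 1)) * ((I - 1) * d * (N - d)) :=
        mul_lt_mul_of_pos_right hcore (by positivity)
    _ = ((I - 1) * N - (I - 1) * d) ^ 2 * ((2 * I - 1) * (N - (2 * I - 1)) * d * (N - d)) := by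
        ring

section

variable {V : Type*} {G : SimpleGraph V} [DecidableRel G.Adj]

lemma card_filter_adj_le_card_adj_pairs {C : Finset V} {x : V} (hx : x ∈ C) (R : Finset V) :
    #(R.filter (G.Adj x)) ≤ #((C ×ˢ R).filter fun p => G.Adj p.1 p.2) :=
  card_le_card_of_injOn (fun y => (x, y))
    (fun _ hy =>
      mem_filter.2 ⟨mem_product.2 ⟨hx, (mem_filter.1 hy).1⟩, (mem_filter.1 hy).2⟩)
    (fun _ _ _ _ h => (Prod.mk.inj h).2)

lemma card_filter_adj_le_one {D : Finset V} {x v : V} (h : ∀ y ∈ D, G.Adj x y → y = v) :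
    #(D.filter (G.Adj x)) ≤ 1 :=
  card_le_one.2 fun y hy z hz => by
    rw [mem_filter] at hy hz
    exact (h y hy.1 hy.2).trans (h z hz.1 hz.2).symm

variable [DecidableEq V]

lemma innerDeg_eq_card_filter (x : V) (S : Finset V) :
    innerDeg G x S = #(S.filter (G.Adj x)) := by
  rw [innerDeg, filter_erase,
    erase_eq_of_notMem fun h => G.loopless.irrefl x (mem_filter.1 h).2]

lemma innerDeg_of_isClique {C : Finset V} (hC : G.IsClique (C : Set V)) {x : V} (hx : x ∈ C) :
    innerDeg G x C = #C - 1 := by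
  rw [innerDeg,
    filter_true_of_mem fun y hy => hC hx (mem_of_mem_erase hy) (ne_of_mem_erase hy).symm,
    card_erase_of_mem hx]

lemma innerDeg_union_le (x : V) (C D : Finset V) :
    innerDeg G x (C ∪ D) ≤ innerDeg G x C + #(D.filter (G.Adj x)) := by
  simp only [innerDeg_eq_card_filter, filter_union]
  exact card_union_le _ _

variable [Fintype V]

lemma innerDeg_le_degree (x : V) (S : Finset V) : innerDeg G x S ≤ G.degree x := by
  rw [innerDeg_eq_card_filter, ← SimpleGraph.card_neighborFinset_eq_degree,
    SimpleGraph.neighborFinset_eq_filter]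
  exact card_le_card (filter_subset_filter _ (subset_univ S))

lemma degree_le_innerDeg_add (x : V) (S : Finset V) :
    G.degree x ≤ innerDeg G x S + #((univ \ S).filter (G.Adj x)) := by
  calc G.degree x = #((S ∪ univ \ S).filter (G.Adj x)) := by
        rw [union_sdiff_of_subset (subset_univ S), ← SimpleGraph.card_neighborFinset_eq_degree,
          SimpleGraph.neighborFinset_eq_filter]
    _ ≤ _ := by
        rw [filter_union, innerDeg_eq_card_filter]
        exact card_union_le _ _

lemma commPhi_eq_sum_phiTerm (S : Finset V) :
    commPhi G S = ∑ x ∈ S,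
      phiTerm (Fintype.card V - 1) (#S - 1) (innerDeg G x S) (G.degree x) := rfl

lemma phiTerm_union_lt_of_mem_clique {C D : Finset V} {I : ℕ} (hdisj : Disjoint C D)
    (hC : #C = I) (hD : #D = I) (hcliq : G.IsClique (C : Set V)) (hI : 4 ≤ I)
    (hN : 2 * (I : ℝ) ≤ Fintype.card V - 1) {x : V} (hx : x ∈ C)
    (hcross : #(D.filter (G.Adj x)) ≤ 1) (hout : #((univ \ (C ∪ D)).filter (G.Adj x)) ≤ 1) :
    phiTerm (Fintype.card V - 1) (#(C ∪ D) - 1) (innerDeg G x (C ∪ D)) (G.degree x) <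
      phiTerm (Fintype.card V - 1) (#C - 1) (innerDeg G x C) (G.degree x) := by
  have hωC : innerDeg G x C = I - 1 := hC ▸ innerDeg_of_isClique hcliq hx
  have hω : innerDeg G x (C ∪ D) ≤ I := by
    have := innerDeg_union_le (G := G) x C D; omega
  have hωd := innerDeg_le_degree (G := G) x (C ∪ D)
  have hd_lo : I - 1 ≤ G.degree x := hωC ▸ innerDeg_le_degree x C
  have hd_hi : G.degree x ≤ I + 1 := by
    have := degree_le_innerDeg_add (G := G) x (C ∪ D); omega
  rw [card_union_of_disjoint hdisj, hC, hD, hωC, Nat.cast_sub (by omega)]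
  push_cast
  rw [show (I : ℝ) + I - 1 = 2 * I - 1 by ring]
  refine phiTerm_merge_lt (by exact_mod_cast hI) hN ?_ (by exact_mod_cast hωd)
    (by exact_mod_cast hω) (by exact_mod_cast hd_hi)
  have : 3 ≤ G.degree x := by omega
  positivity

end

theorem stmt_11_general {V : Type*} [Fintype V] [DecidableEq V] (G : SimpleGraph V)
    [DecidableRel G.Adj]
    (Cs Ct : Finset V) (hdisj : Disjoint Cs Ct)
    (I : ℕ) (hCs : Cs.card = I) (hCt : Ct.card = I)
    (hcliqS : G.IsClique (Cs : Set V)) (hcliqT : G.IsClique (Ct : Set V))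
    (u v : V)
    (hcross : ∀ x ∈ Cs, ∀ y ∈ Ct, G.Adj x y → x = u ∧ y = v)
    (hSout : ((Cs ×ˢ (Finset.univ \ (Cs ∪ Ct))).filter (fun pr => G.Adj pr.1 pr.2)).card = 1)
    (hTout : ((Ct ×ˢ (Finset.univ \ (Cs ∪ Ct))).filter (fun pr => G.Adj pr.1 pr.2)).card = 1)
    (hI5 : 5 ≤ I) (hIn : (I : ℝ) < (Fintype.card V : ℝ) / 4) :
    commPhi G (Cs ∪ Ct) < commPhi G Cs + commPhi G Ct := by
  have hcard : 4 * I + 1 ≤ Fintype.card V := by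
    have : (4 * I : ℝ) < Fintype.card V := by linarith
    exact_mod_cast this
  have hN : 2 * (I : ℝ) ≤ Fintype.card V - 1 := by
    have : (4 * I + 1 : ℝ) ≤ Fintype.card V := by exact_mod_cast hcard
    linarith
  simp only [commPhi_eq_sum_phiTerm, sum_union hdisj]
  refine add_lt_add (sum_lt_sum_of_nonempty (card_pos.1 (by omega)) fun x hx => ?_)
    (sum_lt_sum_of_nonempty (card_pos.1 (by omega)) fun x hx => ?_)
  · exact phiTerm_union_lt_of_mem_clique hdisj hCs hCt hcliqS (by omega) hN hx
      (card_filter_adj_le_one fun y hy hxy => (hcross x hx y hy hxy).2)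
      (hSout ▸ card_filter_adj_le_card_adj_pairs hx _)
  · rw [union_comm]
    exact phiTerm_union_lt_of_mem_clique hdisj.symm hCt hCs hcliqT (by omega) hN hx
      (card_filter_adj_le_one fun y hy hxy => (hcross y hy x hx hxy.symm).1)
      (union_comm Cs Ct ▸ hTout ▸ card_filter_adj_le_card_adj_pairs hx _)

theorem stmt_11 {V : Type*} [Fintype V] [DecidableEq V] (G : SimpleGraph V)
    [DecidableRel G.Adj]
    (Cs Ct : Finset V) (hdisj : Disjoint Cs Ct)
    (I : ℕ) (hCs : Cs.card = I) (hCt : Ct.card = I)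
    (hcliqS : G.IsClique (Cs : Set V)) (hcliqT : G.IsClique (Ct : Set V))
    (u v : V) (huS : u ∈ Cs) (hvT : v ∈ Ct) (huv : G.Adj u v)
    (hcross : ∀ x ∈ Cs, ∀ y ∈ Ct, G.Adj x y → x = u ∧ y = v)
    (c o : V) (hc : c ∈ Cs) (ho : o ∈ Ct)
    (hcadj : ∃ w, w ∉ Cs ∪ Ct ∧ G.Adj c w)
    (hoadj : ∃ w, w ∉ Cs ∪ Ct ∧ G.Adj o w)
    (hSout : ((Cs ×ˢ (Finset.univ \ (Cs ∪ Ct))).filter (fun pr => G.Adj pr.1 pr.2)).card = 1)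
    (hTout : ((Ct ×ˢ (Finset.univ \ (Cs ∪ Ct))).filter (fun pr => G.Adj pr.1 pr.2)).card = 1)
    (hI5 : 5 ≤ I) (hIn : (I : ℝ) < (Fintype.card V : ℝ) / 4) :
    commPhi G (Cs ∪ Ct) < commPhi G Cs + commPhi G Ct :=
  stmt_11_general G Cs Ct hdisj I hCs hCt hcliqS hcliqT u v hcross hSout hTout hI5 hIn
end
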